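/- Let F and G be measurable nonnegative real functions on ℝ that are periodic with period 2π and even, with F non-decreasing on (0, π) and G non-increasing on (0, π). Let T : (0, 2π] → (0, 2π] be a Borel measurable map that preserves Lebesgue measure, i.e. for every Borel set B ⊆ (0, 2π], the Lebesgue measure of T^{-1}(B) equals that of B. Then ∫_0^{2π} F(t)·G(t) dt ≤ ∫_0^{2π} F(t)·G(T(t)) dt. -/

import Mathlib

open Real MeasureTheory Set

/-! By the layer-cake formula both sides are integrals over `s, u > 0` of the measures of
`{F > s} ∩ {G > u}` and `{F > s} ∩ T⁻¹{G > u}` inside one period. By inclusion–exclusion, and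
since `T` preserves the measure of `{G > u}`, the latter is at least
`|{F > s}| + |{G > u}| - 2π`. The former is at most this bound: both sets are symmetric under
`t ↦ 2π - t`, and on `(0, π)` the first is an upper set and the second a lower set, so if they
meet at all their union is the whole of `(0, π)`. -/

section

variable {α : Type*} [MeasurableSpace α] (μ : Measure α)

theorem lintegral_ofReal_mul_eq_lintegral_lintegral_measure_inter
    {f g : α → ℝ} (hf : Measurable f) (hg : Measurable g) (hf0 : 0 ≤ f) (hg0 : 0 ≤ g) :
    ∫⁻ x, ENNReal.ofReal (f x * g x) ∂μ =
      ∫⁻ u in Ioi 0, ∫⁻ s in Ioi 0, μ ({x | s < f x} ∩ {x | u < g x}) := by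
  set ν := μ.withDensity fun x => ENNReal.ofReal (f x)
  calc ∫⁻ x, ENNReal.ofReal (f x * g x) ∂μ = ∫⁻ x, ENNReal.ofReal (g x) ∂ν := by
        rw [lintegral_withDensity_eq_lintegral_mul _ hf.ennreal_ofReal hg.ennreal_ofReal]
        simp_rw [Pi.mul_apply, ENNReal.ofReal_mul (hf0 _)]
    _ = ∫⁻ u in Ioi 0, ν {x | u < g x} :=
        lintegral_eq_lintegral_meas_lt ν (ae_of_all _ hg0) hg.aemeasurable
    _ = _ := by
        refine lintegral_congr fun u => ?_
        rw [withDensity_apply _ (measurableSet_lt measurable_const hg),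
          lintegral_eq_lintegral_meas_lt _ (ae_of_all _ hf0) hf.aemeasurable]
        simp_rw [Measure.restrict_apply (measurableSet_lt measurable_const hf)]

theorem measure_add_measure_sub_measure_univ_le_measure_inter (A : Set α) {C : Set α}
    (hC : MeasurableSet C) :
    μ A + μ C - μ univ ≤ μ (A ∩ C) := by
  rw [tsub_le_iff_left, ← measure_union_add_inter A hC]
  gcongr
  exact subset_univ _

end

theorem volume_inter_le_of_monotoneOn_of_antitoneOn {f g : ℝ → ℝ} {a b : ℝ}
    (hf : MonotoneOn f (Ioo a b)) (hg : AntitoneOn g (Ioo a b)) (s u : ℝ) :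
    volume ({x | s < f x} ∩ Ioo a b ∩ ({x | u < g x} ∩ Ioo a b)) ≤
      volume ({x | s < f x} ∩ Ioo a b) + volume ({x | u < g x} ∩ Ioo a b) -
        ENNReal.ofReal (b - a) := by
  set S := {x | s < f x} ∩ Ioo a b
  set L := {x | u < g x} ∩ Ioo a b
  rcases (S ∩ L).eq_empty_or_nonempty with hempty | ⟨t, ⟨hfs, ht⟩, hgu, -⟩
  · simp [hempty]
  have hL : MeasurableSet L := by
    refine OrdConnected.measurableSet ⟨fun x hx z hz y hy => ?_⟩
    have hy' : y ∈ Ioo a b := ⟨hx.2.1.trans_le hy.1, hy.2.trans_lt hz.2.2⟩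
    exact ⟨hz.1.trans_le (hg hy' hz.2 hy.2), hy'⟩
  have hcover : Ioo a b ⊆ S ∪ L := fun x hx => by
    rcases le_total t x with htx | hxt
    · exact Or.inl ⟨hfs.trans_le (hf ht hx htx), hx⟩
    · exact Or.inr ⟨hgu.trans_le (hg hx ht hxt), hx⟩
  refine ENNReal.le_sub_of_add_le_left ENNReal.ofReal_ne_top ?_
  rw [← measure_union_add_inter S hL, ← Real.volume_Ioo]
  gcongr

theorem volume_inter_Ioc_zero_two_mul {X : Set ℝ} {c : ℝ} (hX : MeasurableSet X) (hc : 0 ≤ c)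
    (hsymm : ∀ t, 2 * c - t ∈ X ↔ t ∈ X) :
    volume (X ∩ Ioc 0 (2 * c)) = 2 * volume (X ∩ Ioo 0 c) := by
  have hlower : volume (X ∩ Ioc 0 c) = volume (X ∩ Ioo 0 c) :=
    measure_congr ((ae_eq_refl X).inter Ioo_ae_eq_Ioc).symm
  have hupper : volume (X ∩ Ioc c (2 * c)) = volume (X ∩ Ioo 0 c) := by
    have hreflect : (fun t => 2 * c - t) ⁻¹' (X ∩ Ico 0 c) = X ∩ Ioc c (2 * c) := by
      ext t
      simp only [mem_preimage, mem_inter_iff, mem_Ico, mem_Ioc, hsymm]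
      constructor <;> rintro ⟨hX, h₁, h₂⟩ <;> exact ⟨hX, by linarith, by linarith⟩
    rw [← hreflect, (Measure.measurePreserving_sub_left volume (2 * c)).measure_preimage
      (hX.inter measurableSet_Ico).nullMeasurableSet]
    exact measure_congr ((ae_eq_refl X).inter Ioo_ae_eq_Ico).symm
  have hdisj : Disjoint (X ∩ Ioc 0 c) (X ∩ Ioc c (2 * c)) :=
    (Ioc_disjoint_Ioc_of_le le_rfl).mono inter_subset_right inter_subset_right
  rw [← Ioc_union_Ioc_eq_Ioc hc (by linarith), inter_union_distrib_left,
    measure_union hdisj (hX.inter measurableSet_Ioc), hlower, hupper, two_mul]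

theorem restrict_Ioc_measure_inter_le {F G : ℝ → ℝ} {c : ℝ} (hc : 0 ≤ c)
    (hF : Measurable F) (hG : Measurable G)
    (hFsymm : ∀ t, F (2 * c - t) = F t) (hGsymm : ∀ t, G (2 * c - t) = G t)
    (hFmono : MonotoneOn F (Ioo 0 c)) (hGanti : AntitoneOn G (Ioo 0 c)) (s u : ℝ) :
    volume.restrict (Ioc 0 (2 * c)) ({t | s < F t} ∩ {t | u < G t}) ≤
      volume.restrict (Ioc 0 (2 * c)) {t | s < F t} +
        volume.restrict (Ioc 0 (2 * c)) {t | u < G t} -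
          volume.restrict (Ioc 0 (2 * c)) univ := by
  have hA : MeasurableSet {t | s < F t} := measurableSet_lt measurable_const hF
  have hB : MeasurableSet {t | u < G t} := measurableSet_lt measurable_const hG
  simp only [Measure.restrict_apply' measurableSet_Ioc, univ_inter, Real.volume_Ioc, sub_zero]
  rw [volume_inter_Ioc_zero_two_mul (hA.inter hB) hc (by simp [hFsymm, hGsymm]),
    volume_inter_Ioc_zero_two_mul hA hc (by simp [hFsymm]),
    volume_inter_Ioc_zero_two_mul hB hc (by simp [hGsymm]),
    ENNReal.ofReal_mul zero_le_two, ENNReal.ofReal_ofNat, ← mul_add,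
    ← ENNReal.mul_sub fun _ _ => ENNReal.ofNat_ne_top, inter_inter_distrib_right]
  gcongr
  simpa only [sub_zero] using volume_inter_le_of_monotoneOn_of_antitoneOn hFmono hGanti s u

theorem stmt_11 (F G : ℝ → ℝ) (hFmeas : Measurable F) (hGmeas : Measurable G)
    (hF0 : ∀ x, 0 ≤ F x) (hG0 : ∀ x, 0 ≤ G x)
    (hFper : Function.Periodic F (2 * π)) (hGper : Function.Periodic G (2 * π))
    (hFeven : ∀ x, F (-x) = F x) (hGeven : ∀ x, G (-x) = G x)
    (hFmono : MonotoneOn F (Set.Ioo 0 π)) (hGanti : AntitoneOn G (Set.Ioo 0 π))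
    (T : ℝ → ℝ)
    (hTpres : MeasurePreserving T (volume.restrict (Set.Ioc 0 (2 * π)))
      (volume.restrict (Set.Ioc 0 (2 * π)))) :
    ∫⁻ t in Set.Ioc 0 (2 * π), ENNReal.ofReal (F t * G t) ≤
      ∫⁻ t in Set.Ioc 0 (2 * π), ENNReal.ofReal (F t * G (T t)) := by
  set μ := volume.restrict (Ioc 0 (2 * π))
  have hreflect {H : ℝ → ℝ} (hper : Function.Periodic H (2 * π)) (heven : ∀ x, H (-x) = H x)
      (t : ℝ) : H (2 * π - t) = H t := by
    rw [sub_eq_neg_add, hper, heven]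
  rw [lintegral_ofReal_mul_eq_lintegral_lintegral_measure_inter μ hFmeas hGmeas hF0 hG0,
    lintegral_ofReal_mul_eq_lintegral_lintegral_measure_inter (g := fun t => G (T t)) μ
      hFmeas (hGmeas.comp hTpres.measurable) hF0 fun t => hG0 (T t)]
  refine lintegral_mono fun u => lintegral_mono fun s => ?_
  have hB : MeasurableSet {t | u < G t} := measurableSet_lt measurable_const hGmeas
  calc μ ({t | s < F t} ∩ {t | u < G t})
      ≤ μ {t | s < F t} + μ {t | u < G t} - μ univ :=
        restrict_Ioc_measure_inter_le pi_nonneg hFmeas hGmeas (hreflect hFper hFeven)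
          (hreflect hGper hGeven) hFmono hGanti s u
    _ = μ {t | s < F t} + μ (T ⁻¹' {t | u < G t}) - μ univ := by
        rw [hTpres.measure_preimage hB.nullMeasurableSet]
    _ ≤ μ ({t | s < F t} ∩ T ⁻¹' {t | u < G t}) :=
        measure_add_measure_sub_measure_univ_le_measure_inter μ _ (hTpres.measurable hB)
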